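/- Assume (A1) and (A2). Let η⁰, η¹ ∈ L_Φ and set η^x := x·η¹ + (1-x)·η⁰ for x ∈ [0, 1]. Then (with the convention 0·Φ'(0) := 0): η¹·Φ'(η¹) ∈ L¹(P), (η⁰·Φ'(η¹))⁺ ∈ L¹(P), and the left derivative at x = 1 of the convex function x ↦ E[Φ(η^x)] exists in (-∞, +∞] and equals E[Φ'(η¹)·(η¹ - η⁰)], i.e., lim_{x↑1} (E[Φ(η¹)] - E[Φ(η^x)])/(1 - x) = E[Φ'(η¹)·(η¹ - η⁰)]. -/

import Mathlib

open MeasureTheory Filter Set Topology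
open scoped ENNReal

noncomputable section

/-- The positive part of an extended real number, as an element of `ℝ≥0∞`. -/
def EReal.toENN (x : EReal) : ℝ≥0∞ := if x = ⊤ then ⊤ else ENNReal.ofReal x.toReal

/-- Extended-real-valued expectation: the lower integral of the positive part minus the lower
integral of the negative part. -/
def ewp {Ω : Type*} [MeasurableSpace Ω] (P : Measure Ω) (H : Ω → EReal) : EReal :=
  ((∫⁻ ω, (H ω).toENN ∂P : ℝ≥0∞) : EReal) - ((∫⁻ ω, (-(H ω)).toENN ∂P : ℝ≥0∞) : EReal)

/-!
`Φ` is a supremum of affine functions, hence convex where it is finite. The Inada conditions make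
`Φ` finite on `(0, ∞)` with `Φ'(0+) = -∞`, because at `y = u'(x)` the supremum is attained at `x`.
By convexity the quotients `(Φ(η¹) - Φ(η^x)) / (1 - x)` increase pointwise as `x ↑ 1`, to
`Φ'(η¹)(η¹ - η⁰)` (to `+∞` on `{η¹ = 0 < η⁰}`), so monotone convergence started from the integrable
quotient at `x = 0` gives the left derivative. The integrability claims follow from the chord
bounds `2(Φ(y) - Φ(y/2)) ≤ y Φ'(y) ≤ Φ(2y) - Φ(y)` and `z Φ'(y) ≤ Φ(y + z) - Φ(y)`, whose right
sides are integrable by (A2) and the convexity of `L_Φ`.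
-/

lemma tendsto_nhdsLT_of_monotoneOn_of_tendsto_comp {α β : Type*} [LinearOrder α]
    [TopologicalSpace α] [OrderTopology α] [CompleteLinearOrder β] [TopologicalSpace β]
    [OrderTopology β] {f : α → β} {c b : α} (hcb : c < b) (hf : MonotoneOn f (Ico c b))
    {x : ℕ → α} (hx : Tendsto x atTop (𝓝[<] b)) {L : β}
    (hL : Tendsto (f ∘ x) atTop (𝓝 L)) : Tendsto f (𝓝[<] b) (𝓝 L) := by
  have hclamp : MonotoneOn (fun t => f (max t c)) (Iio b) := fun s hs t ht hst =>
    hf ⟨le_max_right _ _, max_lt hs hcb⟩ ⟨le_max_right _ _, max_lt ht hcb⟩ (max_le_max_right c hst)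
  have heq : (fun t => f (max t c)) =ᶠ[𝓝[<] b] f := by
    filter_upwards [Ioo_mem_nhdsLT hcb] with t ht
    rw [max_eq_left ht.1.le]
  have hlim := (hclamp.tendsto_nhdsLT (OrderTop.bddAbove _)).congr' heq
  rwa [tendsto_nhds_unique (hlim.comp hx) hL] at hlim

section ewp

variable {Ω : Type*} [MeasurableSpace Ω] {P : Measure Ω}

-- `EReal.toENN` is definitionally Mathlib's `EReal.toENNReal`.
lemma ewp_eq_lintegral_toENNReal_sub (H : Ω → EReal) :
    ewp P H = ((∫⁻ ω, (H ω).toENNReal ∂P : ℝ≥0∞) : EReal)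
      - ((∫⁻ ω, (-H ω).toENNReal ∂P : ℝ≥0∞) : EReal) := rfl

lemma ewp_congr_ae {H H' : Ω → EReal} (h : H =ᵐ[P] H') : ewp P H = ewp P H' := by
  simp only [ewp_eq_lintegral_toENNReal_sub]
  congr 2 <;> refine lintegral_congr_ae ?_ <;> filter_upwards [h] with ω hω <;> rw [hω]

lemma ewp_coe_of_integrable {f : Ω → ℝ} (hf : Integrable f P) :
    ewp P (fun ω => (f ω : EReal)) = ((∫ ω, f ω ∂P : ℝ) : EReal) := by
  have hneg : ∫⁻ ω, ENNReal.ofReal (-f ω) ∂P ≠ ⊤ := hf.neg.lintegral_lt_top.ne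
  simp only [ewp_eq_lintegral_toENNReal_sub, ← EReal.coe_neg, EReal.real_coe_toENNReal]
  rw [integral_eq_lintegral_pos_part_sub_lintegral_neg_part hf, EReal.coe_sub,
    EReal.coe_ennreal_toReal hf.lintegral_lt_top.ne, EReal.coe_ennreal_toReal hneg]

lemma integrable_toReal_of_lintegral_toENNReal_ne_top {H : Ω → EReal} (hH : AEMeasurable H P)
    (hpos : ∫⁻ ω, (H ω).toENNReal ∂P ≠ ⊤) (hneg : ∫⁻ ω, (-H ω).toENNReal ∂P ≠ ⊤) :
    Integrable (fun ω => (H ω).toReal) P := by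
  have hsplit : ∀ x : EReal, x.toReal = x.toENNReal.toReal - (-x).toENNReal.toReal := by
    intro x
    induction x with
    | bot => simp
    | coe r => simp [← EReal.coe_neg, ENNReal.toReal_ofReal']
    | top => simp
  simp only [hsplit]
  exact (integrable_toReal_of_lintegral_ne_top hH.ereal_toENNReal hpos).sub
    (integrable_toReal_of_lintegral_ne_top hH.neg.ereal_toENNReal hneg)

lemma ae_ne_top_of_lintegral_toENNReal_ne_top {H : Ω → EReal} (hH : AEMeasurable H P)
    (hpos : ∫⁻ ω, (H ω).toENNReal ∂P ≠ ⊤) : ∀ᵐ ω ∂P, H ω ≠ ⊤ :=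
  (ae_lt_top' hH.ereal_toENNReal hpos).mono fun _ h => EReal.toENNReal_ne_top_iff.1 h.ne

lemma ewp_eq_integral_toReal {H : Ω → EReal} (hH : AEMeasurable H P)
    (hpos : ∫⁻ ω, (H ω).toENNReal ∂P ≠ ⊤) (hneg : ∫⁻ ω, (-H ω).toENNReal ∂P ≠ ⊤) :
    ewp P H = ((∫ ω, (H ω).toReal ∂P : ℝ) : EReal) := by
  rw [← ewp_coe_of_integrable (integrable_toReal_of_lintegral_toENNReal_ne_top hH hpos hneg)]
  refine ewp_congr_ae ?_
  filter_upwards [ae_ne_top_of_lintegral_toENNReal_ne_top hH hpos,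
    ae_ne_top_of_lintegral_toENNReal_ne_top hH.neg hneg] with ω hp hn
  rw [EReal.coe_toReal hp]
  simpa [EReal.neg_eq_top_iff] using hn

lemma lintegral_toENNReal_neg_ne_top_of_ge [IsFiniteMeasure P] {H : Ω → EReal} {c : ℝ}
    (hc : ∀ ω, (c : EReal) ≤ H ω) : ∫⁻ ω, (-H ω).toENNReal ∂P ≠ ⊤ := by
  refine ne_top_of_le_ne_top ?_ (lintegral_mono (g := fun _ => ENNReal.ofReal (-c)) fun ω => ?_)
  · rw [lintegral_const]
    exact ENNReal.mul_ne_top ENNReal.ofReal_ne_top (measure_ne_top P univ)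
  rw [← EReal.real_coe_toENNReal, EReal.coe_neg]
  exact EReal.toENNReal_le_toENNReal (EReal.neg_le_neg_iff.2 (hc ω))

/-- The positive parts increase and the negative parts decrease from an integrable start, so the
limit is never of the form `⊤ - ⊤`. -/
lemma tendsto_ewp_of_monotone {H : ℕ → Ω → EReal} {G : Ω → EReal}
    (hH : ∀ n, AEMeasurable (H n) P) (hmono : ∀ᵐ ω ∂P, Monotone fun n => H n ω)
    (hlim : ∀ᵐ ω ∂P, Tendsto (fun n => H n ω) atTop (𝓝 (G ω)))
    (hneg : ∫⁻ ω, (-H 0 ω).toENNReal ∂P ≠ ⊤) :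
    Tendsto (fun n => ewp P (H n)) atTop (𝓝 (ewp P G)) := by
  have hpos_lim : Tendsto (fun n => ∫⁻ ω, (H n ω).toENNReal ∂P) atTop
      (𝓝 (∫⁻ ω, (G ω).toENNReal ∂P)) :=
    lintegral_tendsto_of_tendsto_of_monotone (fun n => (hH n).ereal_toENNReal)
      (hmono.mono fun ω h _ _ hmn => EReal.toENNReal_le_toENNReal (h hmn))
      (hlim.mono fun ω h => (EReal.continuous_toENNReal.tendsto _).comp h)
  have hneg_lim : Tendsto (fun n => ∫⁻ ω, (-H n ω).toENNReal ∂P) atTop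
      (𝓝 (∫⁻ ω, (-G ω).toENNReal ∂P)) :=
    lintegral_tendsto_of_tendsto_of_antitone (fun n => (hH n).neg.ereal_toENNReal)
      (hmono.mono fun ω h _ _ hmn => EReal.toENNReal_le_toENNReal (EReal.neg_le_neg_iff.2 (h hmn)))
      hneg (hlim.mono fun ω h =>
        (EReal.continuous_toENNReal.tendsto _).comp ((continuous_neg.tendsto _).comp h))
  have hneg_fin : ∫⁻ ω, (-G ω).toENNReal ∂P ≠ ⊤ := by
    refine ne_top_of_le_ne_top hneg (le_of_tendsto' hneg_lim fun n => lintegral_mono_ae ?_)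
    filter_upwards [hmono] with ω h
    exact EReal.toENNReal_le_toENNReal (EReal.neg_le_neg_iff.2 (h (Nat.zero_le n)))
  simp only [ewp_eq_lintegral_toENNReal_sub, sub_eq_add_neg]
  refine (EReal.continuousAt_add ?_ ?_).tendsto.comp (Tendsto.prodMk_nhds
    ((continuous_coe_ennreal_ereal.tendsto _).comp hpos_lim)
    ((continuous_neg.tendsto _).comp ((continuous_coe_ennreal_ereal.tendsto _).comp hneg_lim)))
  · exact Or.inr (by simpa [EReal.neg_eq_bot_iff] using hneg_fin)
  · exact Or.inl (EReal.coe_ennreal_ne_bot _)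

lemma monotoneOn_integral_of_ae {F : ℝ → Ω → ℝ} {s : Set ℝ}
    (hint : ∀ x ∈ s, Integrable (F x) P) (hmono : ∀ᵐ ω ∂P, MonotoneOn (F · ω) s) :
    MonotoneOn (fun x => ∫ ω, F x ω ∂P) s := fun x hx x' hx' hxx' =>
  integral_mono_ae (hint x hx) (hint x' hx') (hmono.mono fun _ h => h hx hx' hxx')

lemma tendsto_integral_nhdsLT_of_monotoneOn {F : ℝ → Ω → ℝ} {G : Ω → EReal} {c b : ℝ}
    (hcb : c < b) (hint : ∀ x ∈ Ico c b, Integrable (F x) P)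
    (hmono : ∀ᵐ ω ∂P, MonotoneOn (F · ω) (Ico c b))
    (hlim : ∀ᵐ ω ∂P, Tendsto (fun x => (F x ω : EReal)) (𝓝[<] b) (𝓝 (G ω))) :
    Tendsto (fun x => ((∫ ω, F x ω ∂P : ℝ) : EReal)) (𝓝[<] b) (𝓝 (ewp P G)) := by
  obtain ⟨x, hx_mono, hx_mem, hx_lim⟩ := exists_seq_strictMono_tendsto' hcb
  have hxs : ∀ n, x n ∈ Ico c b := fun n => Ioo_subset_Ico_self (hx_mem n)
  have hx : Tendsto x atTop (𝓝[<] b) :=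
    tendsto_nhdsWithin_iff.2 ⟨hx_lim, Eventually.of_forall fun n => (hx_mem n).2⟩
  refine tendsto_nhdsLT_of_monotoneOn_of_tendsto_comp hcb
    (fun s hs t ht hst => EReal.coe_le_coe_iff.2 (monotoneOn_integral_of_ae hint hmono hs ht hst))
    hx ?_
  have hseq := tendsto_ewp_of_monotone (P := P) (H := fun n ω => (F (x n) ω : EReal))
    (fun n => (hint _ (hxs n)).aemeasurable.coe_real_ereal)
    (hmono.mono fun ω h m n hmn =>
      EReal.coe_le_coe_iff.2 (h (hxs m) (hxs n) (hx_mono.monotone hmn)))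
    (hlim.mono fun ω h => h.comp hx)
    (by simpa [← EReal.coe_neg] using (hint _ (hxs 0)).neg.lintegral_lt_top.ne)
  simpa only [Function.comp_def, ewp_coe_of_integrable (hint _ (hxs _))] using hseq

lemma ewp_ne_bot_of_monotoneOn {F : ℝ → Ω → ℝ} {G : Ω → EReal} {c b : ℝ}
    (hcb : c < b) (hint : ∀ x ∈ Ico c b, Integrable (F x) P)
    (hmono : ∀ᵐ ω ∂P, MonotoneOn (F · ω) (Ico c b))
    (hlim : ∀ᵐ ω ∂P, Tendsto (fun x => (F x ω : EReal)) (𝓝[<] b) (𝓝 (G ω))) :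
    ewp P G ≠ ⊥ := by
  refine ne_bot_of_le_ne_bot (EReal.coe_ne_bot (∫ ω, F c ω ∂P))
    (ge_of_tendsto (tendsto_integral_nhdsLT_of_monotoneOn hcb hint hmono hlim) ?_)
  filter_upwards [Ico_mem_nhdsLT hcb] with x hx
  exact EReal.coe_le_coe_iff.2
    (monotoneOn_integral_of_ae hint hmono (left_mem_Ico.2 hcb) hx hx.1)

end ewp

/-- The quotient is the slope at `1` of the convex function `x ↦ f (x y₁ + (1 - x) y₀)`. -/
lemma ConvexOn.monotoneOn_div_one_sub {f : ℝ → ℝ} {S : Set ℝ} (hf : ConvexOn ℝ S f)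
    {y₀ y₁ : ℝ} (h₀ : y₀ ∈ S) (h₁ : y₁ ∈ S) :
    MonotoneOn (fun x => (f y₁ - f (x * y₁ + (1 - x) * y₀)) / (1 - x)) (Ico 0 1) := by
  have hg : ConvexOn ℝ (Icc (0 : ℝ) 1) (f ∘ AffineMap.lineMap y₀ y₁) :=
    (hf.comp_affineMap _).subset (fun _ ht => hf.1.lineMap_mem h₀ h₁ ht) (convex_Icc 0 1)
  refine ((hg.slope_mono (right_mem_Icc.2 zero_le_one)).mono
    fun x hx => ⟨Ico_subset_Icc_self hx, hx.2.ne⟩).congr fun x hx => ?_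
  rw [slope_def_field, Function.comp_apply, Function.comp_apply, AffineMap.lineMap_apply_one,
    AffineMap.lineMap_apply_ring, ← neg_div_neg_eq, neg_sub, neg_sub]
  ring_nf

lemma tendsto_div_one_sub_of_hasDerivAt {f : ℝ → ℝ} {f' y₀ y₁ : ℝ} (hf : HasDerivAt f f' y₁) :
    Tendsto (fun x => (f y₁ - f (x * y₁ + (1 - x) * y₀)) / (1 - x)) (𝓝[<] 1)
      (𝓝 (f' * (y₁ - y₀))) := by
  have hline : HasDerivAt (fun x : ℝ => x * y₁ + (1 - x) * y₀) (y₁ - y₀) 1 := by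
    have h := ((hasDerivAt_id (1 : ℝ)).mul_const (y₁ - y₀)).add_const y₀
    rw [one_mul] at h
    exact h.congr_of_eventuallyEq (Eventually.of_forall fun x => by simp only [id]; ring)
  have hcomp := (hasDerivAt_iff_tendsto_slope.1
    ((by simpa using hf : HasDerivAt f f' (1 * y₁ + (1 - 1) * y₀)).comp 1 hline)).mono_left
    (nhdsWithin_mono _ fun x hx => (ne_of_lt hx : x ≠ 1))
  refine hcomp.congr' (eventually_nhdsWithin_of_forall fun x _ => ?_)
  simp only [slope_def_field, Function.comp_apply]
  rw [← neg_div_neg_eq, neg_sub, neg_sub]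
  ring_nf

/-- The quotient is `-y₀` times the slope of `f` between `0` and `(1 - x) y₀`. -/
lemma tendsto_div_one_sub_atTop_of_slope {f : ℝ → ℝ} {y₀ : ℝ} (hy₀ : 0 < y₀)
    (hf : Tendsto (slope f 0) (𝓝[>] 0) atBot) :
    Tendsto (fun x => (f 0 - f (x * 0 + (1 - x) * y₀)) / (1 - x)) (𝓝[<] 1) atTop := by
  have hs : Tendsto (fun x : ℝ => (1 - x) * y₀) (𝓝[<] 1) (𝓝[>] 0) := by
    have h := (by fun_prop : Continuous fun x : ℝ => (1 - x) * y₀).tendsto 1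
    simp only [sub_self, zero_mul] at h
    exact tendsto_nhdsWithin_iff.2 ⟨h.mono_left nhdsWithin_le_nhds,
      eventually_nhdsWithin_of_forall fun x hx => mul_pos (sub_pos.2 hx) hy₀⟩
  refine ((hf.comp hs).const_mul_atBot_of_neg (neg_neg_of_pos hy₀)).congr'
    (eventually_nhdsWithin_of_forall fun x hx => ?_)
  have h1x : (1 - x) ≠ 0 := (sub_pos.2 hx).ne'
  simp only [Function.comp_apply, slope_def_field, mul_zero, zero_add, sub_zero]
  field_simp
  ring

section integrability

variable {Ω : Type*} [MeasurableSpace Ω] {P : Measure Ω} {f f' : ℝ → ℝ}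

/-- `f' ∘ g` with the value `0` on `{g = 0}` is measurable: on `(0, ∞)` it agrees with the
measurable function `deriv f`. -/
lemma measurable_ite_eq_zero_of_hasDerivAt (hf' : ∀ y, 0 < y → HasDerivAt f (f' y) y)
    {g : Ω → ℝ} (hg : Measurable g) (hg₀ : ∀ ω, 0 ≤ g ω) :
    Measurable fun ω => if g ω = 0 then 0 else f' (g ω) := by
  have heq : (fun ω => if g ω = 0 then 0 else f' (g ω)) =
      fun ω => if g ω = 0 then 0 else deriv f (g ω) := by
    funext ω
    split_ifs with h
    · rfl
    · exact (hf' _ ((hg₀ ω).lt_of_ne' h)).deriv.symm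
  rw [heq]
  exact Measurable.ite (hg (measurableSet_singleton 0)) measurable_const
    ((measurable_deriv f).comp hg)

lemma integrable_ite_mul_deriv_of_convexOn (hf : ConvexOn ℝ (Ioi 0) f)
    (hf' : ∀ y, 0 < y → HasDerivAt f (f' y) y) {g : Ω → ℝ} (hg : Measurable g)
    (hg₀ : ∀ ω, 0 ≤ g ω) (hint : ∀ l : ℝ, 0 < l → Integrable (fun ω => f (l * g ω)) P) :
    Integrable (fun ω => if g ω = 0 then 0 else g ω * f' (g ω)) P := by
  have hbound : ∀ y : ℝ, 0 < y →
      |y * f' y| ≤ |f (2 * y)| + 3 * |f (1 * y)| + 2 * |f (2⁻¹ * y)| := by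
    intro y hy
    have hup := hf.le_slope_of_hasDerivAt hy (by simp [hy] : 2 * y ∈ Ioi 0)
      (by linarith) (hf' y hy)
    have hlow := hf.slope_le_of_hasDerivAt (by simp [hy] : 2⁻¹ * y ∈ Ioi 0) hy
      (by linarith) (hf' y hy)
    rw [slope_def_field, le_div_iff₀ (by linarith)] at hup
    rw [slope_def_field, div_le_iff₀ (by linarith)] at hlow
    rw [abs_le, one_mul]
    constructor <;> nlinarith [le_abs_self (f y), neg_abs_le (f y), le_abs_self (f (2 * y)),
      neg_abs_le (f (2 * y)), le_abs_self (f (2⁻¹ * y)), neg_abs_le (f (2⁻¹ * y))]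
  refine ((((hint 2 two_pos).abs.add ((hint 1 one_pos).abs.const_mul 3)).add
    ((hint 2⁻¹ (by norm_num)).abs.const_mul 2))).mono' ?_ (Eventually.of_forall fun ω => ?_)
  · have heq : (fun ω => if g ω = 0 then 0 else g ω * f' (g ω)) =
        fun ω => g ω * if g ω = 0 then 0 else f' (g ω) := by
      funext ω
      split_ifs <;> simp
    rw [heq]
    exact (hg.mul (measurable_ite_eq_zero_of_hasDerivAt hf' hg hg₀)).aestronglyMeasurable
  · simp only [Real.norm_eq_abs, Pi.add_apply]
    split_ifs with h
    · simp only [abs_zero]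
      positivity
    · exact hbound _ ((hg₀ ω).lt_of_ne' h)

lemma integrable_ite_max_mul_deriv_of_convexOn (hf : ConvexOn ℝ (Ioi 0) f)
    (hf' : ∀ y, 0 < y → HasDerivAt f (f' y) y) {g h : Ω → ℝ} (hg : Measurable g)
    (hg₀ : ∀ ω, 0 ≤ g ω) (hh : Measurable h) (hh₀ : ∀ ω, 0 ≤ h ω)
    (hsum : Integrable (fun ω => f (g ω + h ω)) P) (hint : Integrable (fun ω => f (g ω)) P) :
    Integrable (fun ω => if g ω = 0 then 0 else max (h ω * f' (g ω)) 0) P := by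
  have hbound : ∀ y z : ℝ, 0 < y → 0 ≤ z → max (z * f' y) 0 ≤ |f (y + z)| + |f y| := by
    intro y z hy hz
    refine max_le ?_ (by positivity)
    rcases hz.eq_or_lt with rfl | hz
    · simp only [zero_mul]
      positivity
    have hup := hf.le_slope_of_hasDerivAt hy (by simp; linarith : y + z ∈ Ioi 0)
      (by linarith) (hf' y hy)
    rw [slope_def_field, add_sub_cancel_left, le_div_iff₀ hz] at hup
    nlinarith [le_abs_self (f (y + z)), neg_abs_le (f y)]
  have heq : (fun ω => if g ω = 0 then 0 else max (h ω * f' (g ω)) 0) =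
      fun ω => max (h ω * if g ω = 0 then 0 else f' (g ω)) 0 := by
    funext ω
    split_ifs <;> simp
  refine (hsum.abs.add hint.abs).mono' ?_ (Eventually.of_forall fun ω => ?_)
  · rw [heq]
    exact ((hh.mul (measurable_ite_eq_zero_of_hasDerivAt hf' hg hg₀)).max
      measurable_const).aestronglyMeasurable
  · simp only [Real.norm_eq_abs, Pi.add_apply]
    split_ifs with h0
    · simp only [abs_zero]
      positivity
    · rw [abs_of_nonneg (le_max_right _ _)]
      exact hbound _ _ ((hg₀ ω).lt_of_ne' h0) (hh₀ ω)

end integrability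

def convexConj (u : ℝ → EReal) (y : ℝ) : EReal := ⨆ x : ℝ, (u x - ((x * y : ℝ) : EReal))

section convexConj

variable (u : ℝ → EReal)

lemma sub_mul_le_convexConj (x y : ℝ) : u x - ((x * y : ℝ) : EReal) ≤ convexConj u y :=
  le_iSup (fun x : ℝ => u x - ((x * y : ℝ) : EReal)) x

lemma apply_zero_le_convexConj (y : ℝ) : u 0 ≤ convexConj u y := by
  simpa using sub_mul_le_convexConj u 0 y

lemma measurable_convexConj : Measurable (convexConj u) := by
  refine LowerSemicontinuous.measurable
    (lowerSemicontinuous_iSup fun x => Continuous.lowerSemicontinuous ?_)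
  generalize u x = c
  induction c with
  | bot => simp only [EReal.bot_sub]; exact continuous_const
  | coe r =>
      simp_rw [← EReal.coe_sub]
      exact continuous_coe_real_ereal.comp (by fun_prop)
  | top => simp only [EReal.top_sub_coe]; exact continuous_const

lemma convexConj_combo_le {y₀ y₁ r₀ r₁ : ℝ} (h₀ : convexConj u y₀ ≤ r₀)
    (h₁ : convexConj u y₁ ≤ r₁) {t : ℝ} (ht₀ : 0 ≤ t) (ht₁ : t ≤ 1) :
    convexConj u (t * y₁ + (1 - t) * y₀) ≤ ((t * r₁ + (1 - t) * r₀ : ℝ) : EReal) := by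
  refine iSup_le fun z => ?_
  have hz₀ := (sub_mul_le_convexConj u z y₀).trans h₀
  have hz₁ := (sub_mul_le_convexConj u z y₁).trans h₁
  generalize u z = c at hz₀ hz₁ ⊢
  induction c with
  | bot => simp
  | coe r =>
      rw [← EReal.coe_sub, EReal.coe_le_coe_iff] at hz₀ hz₁ ⊢
      nlinarith [mul_le_mul_of_nonneg_left hz₁ ht₀,
        mul_le_mul_of_nonneg_left hz₀ (sub_nonneg.2 ht₁)]
  | top =>
      rw [EReal.top_sub_coe, top_le_iff] at hz₀
      exact absurd hz₀ (EReal.coe_ne_top _)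

lemma convex_setOf_convexConj_ne_top :
    Convex ℝ {y | convexConj u y ≠ ⊤} := fun y₁ h₁ y₀ h₀ t s ht hs hts => by
  obtain rfl : s = 1 - t := by linarith
  exact ne_top_of_le_ne_top (EReal.coe_ne_top _) (convexConj_combo_le u
    (EReal.le_coe_toReal h₀) (EReal.le_coe_toReal h₁) ht (by linarith))

lemma convexOn_toReal_convexConj (hbot : ∀ y, convexConj u y ≠ ⊥) :
    ConvexOn ℝ {y | convexConj u y ≠ ⊤} (fun y => (convexConj u y).toReal) := by
  refine ⟨convex_setOf_convexConj_ne_top u, fun y₁ h₁ y₀ h₀ t s ht hs hts => ?_⟩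
  obtain rfl : s = 1 - t := by linarith
  have h := EReal.toReal_le_toReal (convexConj_combo_le u (EReal.le_coe_toReal h₀)
    (EReal.le_coe_toReal h₁) ht (by linarith)) (hbot _) (EReal.coe_ne_top _)
  rwa [EReal.toReal_coe] at h

lemma toENNReal_convexConj_combo_le (y₀ y₁ : ℝ) {t : ℝ} (ht₀ : 0 ≤ t) (ht₁ : t ≤ 1) :
    (convexConj u (t * y₁ + (1 - t) * y₀)).toENNReal ≤
      (convexConj u y₁).toENNReal + (convexConj u y₀).toENNReal := by
  by_cases h₁ : convexConj u y₁ = ⊤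
  · simp [h₁]
  by_cases h₀ : convexConj u y₀ = ⊤
  · simp [h₀]
  set r₀ := (convexConj u y₀).toReal
  set r₁ := (convexConj u y₁).toReal
  calc (convexConj u (t * y₁ + (1 - t) * y₀)).toENNReal
      ≤ ENNReal.ofReal (t * r₁ + (1 - t) * r₀) := EReal.toENNReal_le_toENNReal
        (convexConj_combo_le u (EReal.le_coe_toReal h₀) (EReal.le_coe_toReal h₁) ht₀ ht₁)
    _ ≤ ENNReal.ofReal (max r₁ r₀) := ENNReal.ofReal_le_ofReal (by
        nlinarith [le_max_left r₁ r₀, le_max_right r₁ r₀])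
    _ ≤ ENNReal.ofReal r₁ + ENNReal.ofReal r₀ := by
        rw [ENNReal.ofReal_max]; exact max_le le_self_add le_add_self
    _ = _ := by rw [EReal.toENNReal_of_ne_top h₁, EReal.toENNReal_of_ne_top h₀]

end convexConj

section conjugateIntegrals

variable {Ω : Type*} [MeasurableSpace Ω] {P : Measure Ω} {u : ℝ → EReal}

lemma lintegral_toENNReal_neg_convexConj_comp_ne_top [IsFiniteMeasure P] (h0 : u 0 ≠ ⊥)
    (g : Ω → ℝ) : ∫⁻ ω, (-convexConj u (g ω)).toENNReal ∂P ≠ ⊤ :=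
  lintegral_toENNReal_neg_ne_top_of_ge fun _ =>
    (EReal.coe_toReal_le h0).trans (apply_zero_le_convexConj u _)

lemma integrable_toReal_convexConj_comp [IsFiniteMeasure P] (h0 : u 0 ≠ ⊥) {g : Ω → ℝ}
    (hg : Measurable g) (hfin : ∫⁻ ω, (convexConj u (g ω)).toENNReal ∂P < ⊤) :
    Integrable (fun ω => (convexConj u (g ω)).toReal) P :=
  integrable_toReal_of_lintegral_toENNReal_ne_top ((measurable_convexConj u).comp hg).aemeasurable
    hfin.ne (lintegral_toENNReal_neg_convexConj_comp_ne_top h0 g)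

lemma ewp_convexConj_comp [IsFiniteMeasure P] (h0 : u 0 ≠ ⊥) {g : Ω → ℝ}
    (hg : Measurable g) (hfin : ∫⁻ ω, (convexConj u (g ω)).toENNReal ∂P < ⊤) :
    ewp P (fun ω => convexConj u (g ω)) = ((∫ ω, (convexConj u (g ω)).toReal ∂P : ℝ) : EReal) :=
  ewp_eq_integral_toReal ((measurable_convexConj u).comp hg).aemeasurable
    hfin.ne (lintegral_toENNReal_neg_convexConj_comp_ne_top h0 g)

lemma lintegral_convexConj_combo_lt_top {η₀ η₁ : Ω → ℝ} (hη₁ : Measurable η₁)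
    (h₀ : ∫⁻ ω, (convexConj u (η₀ ω)).toENNReal ∂P < ⊤)
    (h₁ : ∫⁻ ω, (convexConj u (η₁ ω)).toENNReal ∂P < ⊤) {t : ℝ} (ht₀ : 0 ≤ t) (ht₁ : t ≤ 1) :
    ∫⁻ ω, (convexConj u (t * η₁ ω + (1 - t) * η₀ ω)).toENNReal ∂P < ⊤ := by
  refine (lintegral_mono fun ω => toENNReal_convexConj_combo_le u _ _ ht₀ ht₁).trans_lt ?_
  have hm : Measurable fun ω => (convexConj u (η₁ ω)).toENNReal :=
    ((measurable_convexConj u).comp hη₁).ereal_toENNReal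
  rw [lintegral_add_left hm]
  exact ENNReal.add_lt_top.2 ⟨h₁, h₀⟩

end conjugateIntegrals

/-- (A1) and the standing assumptions on `u`, with `du = u'` on `(a, ∞)`. -/
structure IsInadaUtility (a : EReal) (u : ℝ → EReal) (du : ℝ → ℝ) : Prop where
  ne_top : ∀ x, u x ≠ ⊤
  eq_bot_of_lt : ∀ x : ℝ, (x : EReal) < a → u x = ⊥
  ne_bot_of_gt : ∀ x : ℝ, a < (x : EReal) → u x ≠ ⊥
  monotone : Monotone u
  hasDerivAt : ∀ x : ℝ, a < (x : EReal) → HasDerivAt (fun t => (u t).toReal) (du x) x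
  deriv_pos : ∀ x : ℝ, a < (x : EReal) → 0 < du x
  deriv_antitoneOn : AntitoneOn du {x : ℝ | a < (x : EReal)}
  exists_le_deriv : ∀ M : ℝ, ∃ x : ℝ, a < (x : EReal) ∧ M ≤ du x
  tendsto_deriv_atTop : Tendsto du atTop (𝓝 0)

namespace IsInadaUtility

variable {a : EReal} {u : ℝ → EReal} {du : ℝ → ℝ}
variable {Ω : Type*} [MeasurableSpace Ω] {P : Measure Ω} [IsFiniteMeasure P]

lemma concaveOn_toReal (hu : IsInadaUtility a u du) :
    ConcaveOn ℝ {x : ℝ | a < x} (fun t => (u t).toReal) := by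
  have hopen : IsOpen {x : ℝ | a < x} := isOpen_lt continuous_const continuous_coe_real_ereal
  have hconvex : Convex ℝ {x : ℝ | a < x} := convex_iff_ordConnected.2
    ⟨fun x hx _ _ _ hz => lt_of_lt_of_le hx (EReal.coe_le_coe_iff.2 hz.1)⟩
  refine AntitoneOn.concaveOn_of_deriv hconvex
    (fun x hx => (hu.hasDerivAt x hx).continuousAt.continuousWithinAt) ?_ ?_ <;>
    rw [hopen.interior_eq]
  · exact fun x hx => (hu.hasDerivAt x hx).differentiableAt.differentiableWithinAt
  · intro x hx y hy hxy
    rw [(hu.hasDerivAt x hx).deriv, (hu.hasDerivAt y hy).deriv]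
    exact hu.deriv_antitoneOn hx hy hxy

lemma toReal_le_tangent (hu : IsInadaUtility a u du) {x₀ x : ℝ} (hx₀ : a < x₀) (hx : a < x) :
    (u x).toReal ≤ (u x₀).toReal + du x₀ * (x - x₀) := by
  rcases lt_trichotomy x x₀ with hlt | rfl | hgt
  · have h := hu.concaveOn_toReal.le_slope_of_hasDerivAt hx hx₀ hlt (hu.hasDerivAt x₀ hx₀)
    rw [slope_def_field, le_div_iff₀ (sub_pos.2 hlt)] at h
    linarith
  · simp
  · have h := hu.concaveOn_toReal.slope_le_of_hasDerivAt hx₀ hx hgt (hu.hasDerivAt x₀ hx₀)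
    rw [slope_def_field, div_le_iff₀ (sub_pos.2 hgt)] at h
    linarith

/-- The tangent bound also holds at the left end point `a`, where `u` may be finite, by
monotonicity of `u` and continuity of the tangent. -/
lemma le_tangent (hu : IsInadaUtility a u du) {x₀ : ℝ} (hx₀ : a < x₀) (z : ℝ) :
    u z ≤ (((u x₀).toReal + du x₀ * (z - x₀) : ℝ) : EReal) := by
  rcases lt_or_ge (z : EReal) a with hz | hz
  · rw [hu.eq_bot_of_lt z hz]
    exact bot_le
  have htangent : Tendsto (fun w : ℝ => (((u x₀).toReal + du x₀ * (w - x₀) : ℝ) : EReal))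
      (𝓝[>] z) (𝓝 (((u x₀).toReal + du x₀ * (z - x₀) : ℝ) : EReal)) :=
    ((continuous_coe_real_ereal.comp (by fun_prop)).tendsto z).mono_left nhdsWithin_le_nhds
  refine ge_of_tendsto htangent (eventually_nhdsWithin_of_forall fun w hw => ?_)
  have hwa : a < w := hz.trans_lt (EReal.coe_lt_coe_iff.2 hw)
  calc u z ≤ u w := hu.monotone (le_of_lt hw)
    _ = ((u w).toReal : EReal) := (EReal.coe_toReal (hu.ne_top w) (hu.ne_bot_of_gt w hwa)).symm
    _ ≤ _ := EReal.coe_le_coe_iff.2 (hu.toReal_le_tangent hx₀ hwa)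

lemma convexConj_deriv (hu : IsInadaUtility a u du) {x : ℝ} (hx : a < x) :
    convexConj u (du x) = (((u x).toReal - x * du x : ℝ) : EReal) := by
  refine le_antisymm (iSup_le fun z => ?_) ?_
  · calc u z - ((z * du x : ℝ) : EReal)
        ≤ (((u x).toReal + du x * (z - x) : ℝ) : EReal) - ((z * du x : ℝ) : EReal) :=
          EReal.sub_le_sub (hu.le_tangent hx z) le_rfl
      _ = (((u x).toReal - x * du x : ℝ) : EReal) := by rw [← EReal.coe_sub]; ring_nf
  · calc (((u x).toReal - x * du x : ℝ) : EReal) = u x - ((x * du x : ℝ) : EReal) := by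
          rw [EReal.coe_sub, EReal.coe_toReal (hu.ne_top x) (hu.ne_bot_of_gt x hx)]
      _ ≤ convexConj u (du x) := sub_mul_le_convexConj u x (du x)

/-- `Φ` is finite on `(0, ∞)`: by the Inada conditions every `y > 0` lies between two values of
`u'`, where `Φ` is finite, and `{Φ < ⊤}` is convex. -/
lemma convexConj_ne_top (hu : IsInadaUtility a u du) {y : ℝ} (hy : 0 < y) :
    convexConj u y ≠ ⊤ := by
  obtain ⟨x₁, hx₁, hyx₁⟩ := hu.exists_le_deriv y
  obtain ⟨x₀, hx₀y, hx₁x₀⟩ :=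
    ((hu.tendsto_deriv_atTop.eventually (gt_mem_nhds hy)).and (eventually_ge_atTop x₁)).exists
  have hx₀ : a < x₀ := hx₁.trans_le (EReal.coe_le_coe_iff.2 hx₁x₀)
  refine (convex_setOf_convexConj_ne_top u).ordConnected.out ?_ ?_ ⟨hx₀y.le, hyx₁⟩
  · exact (hu.convexConj_deriv hx₀).trans_ne (EReal.coe_ne_top _)
  · exact (hu.convexConj_deriv hx₁).trans_ne (EReal.coe_ne_top _)

lemma apply_zero_ne_bot (hu : IsInadaUtility a u du) (ha : a < 0) : u 0 ≠ ⊥ :=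
  hu.ne_bot_of_gt 0 (by simpa using ha)

lemma convexConj_ne_bot (hu : IsInadaUtility a u du) (ha : a < 0) (y : ℝ) :
    convexConj u y ≠ ⊥ :=
  ne_bot_of_le_ne_bot (hu.apply_zero_ne_bot ha) (apply_zero_le_convexConj u y)

lemma convexOn_toReal_convexConj_Ioi (hu : IsInadaUtility a u du) (ha : a < 0) :
    ConvexOn ℝ (Ioi 0) (fun y => (convexConj u y).toReal) :=
  (convexOn_toReal_convexConj u (hu.convexConj_ne_bot ha)).subset
    (fun _ hy => hu.convexConj_ne_top hy) (convex_Ioi 0)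

/-- `Φ'(0+) = -∞`: at `y = u'(x)` the supremum defining `Φ` is attained at `x`, so the chord of
`Φ` from `0` to `u'(x)` has slope at most `-x`. -/
lemma tendsto_slope_convexConj_zero (hu : IsInadaUtility a u du) (ha : a < 0)
    (h₀ : convexConj u 0 ≠ ⊤) :
    Tendsto (slope (fun y => (convexConj u y).toReal) 0) (𝓝[>] 0) atBot := by
  have hconv := convexOn_toReal_convexConj u (hu.convexConj_ne_bot ha)
  refine tendsto_atBot.2 fun M => ?_
  set x := max (-M) 0
  have hx : a < x := ha.trans_le (by exact_mod_cast le_max_right (-M) 0)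
  have hδ : 0 < du x := hu.deriv_pos x hx
  have hux : (u x).toReal ≤ (convexConj u 0).toReal := by
    refine EReal.toReal_le_toReal ?_ (hu.ne_bot_of_gt x hx) h₀
    simpa using sub_mul_le_convexConj u x 0
  have hchord : slope (fun y => (convexConj u y).toReal) 0 (du x) ≤ -x := by
    rw [slope_def_field, hu.convexConj_deriv hx, EReal.toReal_coe, sub_zero, div_le_iff₀ hδ]
    linarith
  filter_upwards [Ioc_mem_nhdsGT hδ] with s hs
  calc slope (fun y => (convexConj u y).toReal) 0 s
      ≤ slope (fun y => (convexConj u y).toReal) 0 (du x) :=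
        hconv.slope_mono h₀ ⟨hu.convexConj_ne_top hs.1, hs.1.ne'⟩
          ⟨hu.convexConj_ne_top hδ, hδ.ne'⟩ hs.2
    _ ≤ M := hchord.trans (neg_le.2 (le_max_left _ _))

lemma tendsto_convexConj_div_one_sub (hu : IsInadaUtility a u du) (ha : a < 0) {DPhi : ℝ → ℝ}
    (hDPhi : ∀ y : ℝ, 0 < y → HasDerivAt (fun t => (convexConj u t).toReal) (DPhi y) y)
    {y₀ y₁ : ℝ} (hy₀ : 0 ≤ y₀) (hy₁ : 0 ≤ y₁) (h₁ : convexConj u y₁ ≠ ⊤) :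
    Tendsto (fun x => ((((convexConj u y₁).toReal -
        (convexConj u (x * y₁ + (1 - x) * y₀)).toReal) / (1 - x) : ℝ) : EReal)) (𝓝[<] 1)
      (𝓝 (if y₁ = 0 then (if y₀ = 0 then 0 else ⊤) else ((DPhi y₁ * (y₁ - y₀) : ℝ) : EReal))) := by
  rcases hy₁.eq_or_lt with rfl | hy₁
  · rcases hy₀.eq_or_lt with rfl | hy₀
    · simp
    · simp only [hy₀.ne', if_false]
      exact EReal.tendsto_coe_atTop.comp
        (tendsto_div_one_sub_atTop_of_slope hy₀ (hu.tendsto_slope_convexConj_zero ha h₁))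
  · simp only [hy₁.ne', if_false]
    exact (continuous_coe_real_ereal.tendsto _).comp
      (tendsto_div_one_sub_of_hasDerivAt (y₀ := y₀) (hDPhi y₁ hy₁))

lemma ewp_ne_bot_and_tendsto_div_one_sub (hu : IsInadaUtility a u du) (ha : a < 0)
    {DPhi : ℝ → ℝ}
    (hDPhi : ∀ y : ℝ, 0 < y → HasDerivAt (fun t => (convexConj u t).toReal) (DPhi y) y)
    {η₀ η₁ : Ω → ℝ} (hη₀ : Measurable η₀) (hη₀_nonneg : ∀ ω, 0 ≤ η₀ ω)
    (hη₀_fin : ∫⁻ ω, (convexConj u (η₀ ω)).toENNReal ∂P < ⊤)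
    (hη₁ : Measurable η₁) (hη₁_nonneg : ∀ ω, 0 ≤ η₁ ω)
    (hη₁_fin : ∫⁻ ω, (convexConj u (η₁ ω)).toENNReal ∂P < ⊤) :
    (ewp P (fun ω => if η₁ ω = 0 then (if η₀ ω = 0 then 0 else ⊤)
        else ((DPhi (η₁ ω) * (η₁ ω - η₀ ω) : ℝ) : EReal)) ≠ ⊥) ∧
    Tendsto
      (fun x : ℝ =>
        ((((ewp P (fun ω => convexConj u (η₁ ω))).toReal -
            (ewp P (fun ω => convexConj u (x * η₁ ω + (1 - x) * η₀ ω))).toReal) / (1 - x) : ℝ) :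
          EReal))
      (𝓝[<] (1 : ℝ))
      (𝓝 (ewp P (fun ω => if η₁ ω = 0 then (if η₀ ω = 0 then 0 else ⊤)
        else ((DPhi (η₁ ω) * (η₁ ω - η₀ ω) : ℝ) : EReal)))) := by
  have h0 := hu.apply_zero_ne_bot ha
  have hmix : ∀ x ∈ Ico (0 : ℝ) 1,
      ∫⁻ ω, (convexConj u (x * η₁ ω + (1 - x) * η₀ ω)).toENNReal ∂P < ⊤ :=
    fun x hx => lintegral_convexConj_combo_lt_top hη₁ hη₀_fin hη₁_fin hx.1 hx.2.le
  have hint₁ := integrable_toReal_convexConj_comp h0 hη₁ hη₁_fin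
  have hint : ∀ x ∈ Ico (0 : ℝ) 1, Integrable (fun ω => ((convexConj u (η₁ ω)).toReal -
      (convexConj u (x * η₁ ω + (1 - x) * η₀ ω)).toReal) / (1 - x)) P :=
    fun x hx =>
      (hint₁.sub (integrable_toReal_convexConj_comp h0 (by fun_prop) (hmix x hx))).div_const _
  have hfin := (ae_ne_top_of_lintegral_toENNReal_ne_top
    ((measurable_convexConj u).comp hη₀).aemeasurable hη₀_fin.ne).and
    (ae_ne_top_of_lintegral_toENNReal_ne_top
      ((measurable_convexConj u).comp hη₁).aemeasurable hη₁_fin.ne)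
  have hmono := hfin.mono fun ω h =>
    (convexOn_toReal_convexConj u (hu.convexConj_ne_bot ha)).monotoneOn_div_one_sub h.1 h.2
  have hlim := hfin.mono fun ω h =>
    hu.tendsto_convexConj_div_one_sub ha hDPhi (hη₀_nonneg ω) (hη₁_nonneg ω) h.2
  refine ⟨ewp_ne_bot_of_monotoneOn zero_lt_one hint hmono hlim,
    (tendsto_integral_nhdsLT_of_monotoneOn zero_lt_one hint hmono hlim).congr' ?_⟩
  filter_upwards [Ico_mem_nhdsLT zero_lt_one] with x hx
  rw [ewp_convexConj_comp h0 hη₁ hη₁_fin, ewp_convexConj_comp h0 (by fun_prop) (hmix x hx),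
    EReal.toReal_coe, EReal.toReal_coe, integral_div,
    integral_sub hint₁ (integrable_toReal_convexConj_comp h0 (by fun_prop) (hmix x hx))]

end IsInadaUtility

theorem statement15_general
    {Ω : Type*} [MeasurableSpace Ω] (P : Measure Ω) [IsProbabilityMeasure P]
    (a : EReal) (ha : a < 0)
    (u : ℝ → EReal)
    (hu_ne_top : ∀ x : ℝ, u x ≠ ⊤)
    (hu_bot : ∀ x : ℝ, (x : EReal) < a → u x = ⊥)
    (hu_fin : ∀ x : ℝ, a < (x : EReal) → u x ≠ ⊥)
    (hu_mono : Monotone u)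
    (du : ℝ → ℝ)
    (hdu : ∀ x : ℝ, a < (x : EReal) → HasDerivAt (fun t : ℝ => (u t).toReal) (du x) x)
    (hdu_pos : ∀ x : ℝ, a < (x : EReal) → 0 < du x)
    (hdu_anti : StrictAntiOn du {x : ℝ | a < (x : EReal)})
    (hdu_inada_top : ∀ M : ℝ, ∃ x : ℝ, a < (x : EReal) ∧ M ≤ du x)
    (hdu_inada_zero : Tendsto du atTop (𝓝 0))
    (Phi : ℝ → EReal)
    (hPhi : ∀ y : ℝ, Phi y = ⨆ x : ℝ, (u x - ((x * y : ℝ) : EReal)))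
    (hA2 : ∀ g : Ω → ℝ, Measurable g → (∀ ω, 0 ≤ g ω) →
      ∫⁻ ω, (Phi (g ω)).toENN ∂P < ⊤ →
      ∀ l : ℝ, 0 < l → ∫⁻ ω, (Phi (l * g ω)).toENN ∂P < ⊤)
    (DPhi : ℝ → ℝ)
    (hDPhi : ∀ y : ℝ, 0 < y → HasDerivAt (fun t : ℝ => (Phi t).toReal) (DPhi y) y)
    -- `η⁰, η¹ ∈ L_Φ`
    (eta0 eta1 : Ω → ℝ)
    (heta0_meas : Measurable eta0) (heta0_nonneg : ∀ ω, 0 ≤ eta0 ω)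
    (heta0Phi : ∫⁻ ω, (Phi (eta0 ω)).toENN ∂P < ⊤)
    (heta1_meas : Measurable eta1) (heta1_nonneg : ∀ ω, 0 ≤ eta1 ω)
    (heta1Phi : ∫⁻ ω, (Phi (eta1 ω)).toENN ∂P < ⊤) :
    -- `η¹·Φ'(η¹) ∈ L¹(P)`
    Integrable (fun ω => if eta1 ω = 0 then 0 else eta1 ω * DPhi (eta1 ω)) P ∧
    -- `(η⁰·Φ'(η¹))⁺ ∈ L¹(P)`
    Integrable (fun ω => if eta1 ω = 0 then 0 else max (eta0 ω * DPhi (eta1 ω)) 0) P ∧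
    -- the left derivative at `x = 1` of `x ↦ E[Φ(η^x)]` equals `E[Φ'(η¹)·(η¹ - η⁰)]`,
    -- an element of `(-∞, +∞]` (where `Φ'(η¹)·(η¹ - η⁰) = +∞` on `{η¹ = 0, η⁰ > 0}`
    -- since `Φ'(0⁺) = -∞`, and `:= 0` on `{η¹ = 0, η⁰ = 0}`)
    (ewp P (fun ω => if eta1 ω = 0 then (if eta0 ω = 0 then 0 else ⊤)
        else ((DPhi (eta1 ω) * (eta1 ω - eta0 ω) : ℝ) : EReal)) ≠ ⊥) ∧
    Tendsto
      (fun x : ℝ =>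
        ((((ewp P (fun ω => Phi (eta1 ω))).toReal -
            (ewp P (fun ω => Phi (x * eta1 ω + (1 - x) * eta0 ω))).toReal) / (1 - x) : ℝ) :
          EReal))
      (𝓝[<] (1 : ℝ))
      (𝓝 (ewp P (fun ω => if eta1 ω = 0 then (if eta0 ω = 0 then 0 else ⊤)
        else ((DPhi (eta1 ω) * (eta1 ω - eta0 ω) : ℝ) : EReal)))) := by
  obtain rfl : Phi = convexConj u := funext hPhi
  have hu : IsInadaUtility a u du := ⟨hu_ne_top, hu_bot, hu_fin, hu_mono, hdu, hdu_pos,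
    hdu_anti.antitoneOn, hdu_inada_top, hdu_inada_zero⟩
  have h0 := hu.apply_zero_ne_bot ha
  have hconv := hu.convexOn_toReal_convexConj_Ioi ha
  have hint₁ := integrable_toReal_convexConj_comp h0 heta1_meas heta1Phi
  -- `η¹ + η⁰ = 2 η^{1/2}` is in `L_Φ` by (A2)
  have hsum : Integrable (fun ω => (convexConj u (eta1 ω + eta0 ω)).toReal) P := by
    refine integrable_toReal_convexConj_comp h0 (by fun_prop) ?_
    have hmid := lintegral_convexConj_combo_lt_top heta1_meas heta0Phi heta1Phi
      (t := 2⁻¹) (by norm_num) (by norm_num)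
    have hdouble := hA2 _ (by fun_prop) (fun ω => add_nonneg
      (mul_nonneg (by norm_num) (heta1_nonneg ω)) (mul_nonneg (by norm_num) (heta0_nonneg ω)))
      hmid 2 two_pos
    simp only [show ∀ ω, 2 * (2⁻¹ * eta1 ω + (1 - 2⁻¹) * eta0 ω) = eta1 ω + eta0 ω from
      fun ω => by ring] at hdouble
    exact hdouble
  exact ⟨integrable_ite_mul_deriv_of_convexOn hconv hDPhi heta1_meas heta1_nonneg
      fun l hl => integrable_toReal_convexConj_comp h0 (by fun_prop)
        (hA2 eta1 heta1_meas heta1_nonneg heta1Phi l hl),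
    integrable_ite_max_mul_deriv_of_convexOn hconv hDPhi heta1_meas heta1_nonneg heta0_meas
      heta0_nonneg hsum hint₁,
    hu.ewp_ne_bot_and_tendsto_div_one_sub ha hDPhi heta0_meas heta0_nonneg heta0Phi heta1_meas
      heta1_nonneg heta1Phi⟩

/-- differentiability step in the proof of Proposition 25.  Assume (A1),
(A2) and let `η⁰, η¹ ∈ L_Φ`, `η^x := x·η¹ + (1-x)·η⁰`.  Then (with `0·Φ'(0) := 0`):
`η¹·Φ'(η¹) ∈ L¹(P)`, `(η⁰·Φ'(η¹))⁺ ∈ L¹(P)`, and the left derivative at `x = 1` of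
`x ↦ E[Φ(η^x)]` exists in `(-∞, +∞]` and equals `E[Φ'(η¹)·(η¹ - η⁰)]`. -/
theorem statement15
    {Ω : Type*} [MeasurableSpace Ω] (P : Measure Ω) [IsProbabilityMeasure P]
    (a : EReal) (ha : a < 0)
    (u : ℝ → EReal)
    (hu_ne_top : ∀ x : ℝ, u x ≠ ⊤)
    (hu_bot : ∀ x : ℝ, (x : EReal) < a → u x = ⊥)
    (hu_fin : ∀ x : ℝ, a < (x : EReal) → u x ≠ ⊥)
    (hu_mono : Monotone u)
    (hu_lim : Tendsto u atBot (𝓝 ⊥))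
    (du : ℝ → ℝ)
    (hdu : ∀ x : ℝ, a < (x : EReal) → HasDerivAt (fun t : ℝ => (u t).toReal) (du x) x)
    (hdu_cont : ContinuousOn du {x : ℝ | a < (x : EReal)})
    (hdu_pos : ∀ x : ℝ, a < (x : EReal) → 0 < du x)
    (hdu_anti : StrictAntiOn du {x : ℝ | a < (x : EReal)})
    (hdu_inada_top : ∀ M : ℝ, ∃ x : ℝ, a < (x : EReal) ∧ M ≤ du x)
    (hdu_inada_zero : Tendsto du atTop (𝓝 0))
    (Phi : ℝ → EReal)
    (hPhi : ∀ y : ℝ, Phi y = ⨆ x : ℝ, (u x - ((x * y : ℝ) : EReal)))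
    (hA2 : ∀ g : Ω → ℝ, Measurable g → (∀ ω, 0 ≤ g ω) →
      ∫⁻ ω, (Phi (g ω)).toENN ∂P < ⊤ →
      ∀ l : ℝ, 0 < l → ∫⁻ ω, (Phi (l * g ω)).toENN ∂P < ⊤)
    (DPhi : ℝ → ℝ)
    (hDPhi : ∀ y : ℝ, 0 < y → HasDerivAt (fun t : ℝ => (Phi t).toReal) (DPhi y) y)
    -- `η⁰, η¹ ∈ L_Φ`
    (eta0 eta1 : Ω → ℝ)
    (heta0_meas : Measurable eta0) (heta0_nonneg : ∀ ω, 0 ≤ eta0 ω)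
    (heta0Phi : ∫⁻ ω, (Phi (eta0 ω)).toENN ∂P < ⊤)
    (heta1_meas : Measurable eta1) (heta1_nonneg : ∀ ω, 0 ≤ eta1 ω)
    (heta1Phi : ∫⁻ ω, (Phi (eta1 ω)).toENN ∂P < ⊤) :
    -- `η¹·Φ'(η¹) ∈ L¹(P)`
    Integrable (fun ω => if eta1 ω = 0 then 0 else eta1 ω * DPhi (eta1 ω)) P ∧
    -- `(η⁰·Φ'(η¹))⁺ ∈ L¹(P)`
    Integrable (fun ω => if eta1 ω = 0 then 0 else max (eta0 ω * DPhi (eta1 ω)) 0) P ∧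
    -- the left derivative at `x = 1` of `x ↦ E[Φ(η^x)]` equals `E[Φ'(η¹)·(η¹ - η⁰)]`,
    -- an element of `(-∞, +∞]` (where `Φ'(η¹)·(η¹ - η⁰) = +∞` on `{η¹ = 0, η⁰ > 0}`
    -- since `Φ'(0⁺) = -∞`, and `:= 0` on `{η¹ = 0, η⁰ = 0}`)
    (ewp P (fun ω => if eta1 ω = 0 then (if eta0 ω = 0 then 0 else ⊤)
        else ((DPhi (eta1 ω) * (eta1 ω - eta0 ω) : ℝ) : EReal)) ≠ ⊥) ∧
    Tendsto
      (fun x : ℝ =>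
        ((((ewp P (fun ω => Phi (eta1 ω))).toReal -
            (ewp P (fun ω => Phi (x * eta1 ω + (1 - x) * eta0 ω))).toReal) / (1 - x) : ℝ) :
          EReal))
      (𝓝[<] (1 : ℝ))
      (𝓝 (ewp P (fun ω => if eta1 ω = 0 then (if eta0 ω = 0 then 0 else ⊤)
        else ((DPhi (eta1 ω) * (eta1 ω - eta0 ω) : ℝ) : EReal)))) :=
  statement15_general P a ha u hu_ne_top hu_bot hu_fin hu_mono du hdu hdu_pos hdu_anti hdu_inada_top
    hdu_inada_zero Phi hPhi hA2 DPhi hDPhi eta0 eta1 heta0_meas heta0_nonneg heta0Phi heta1_meas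
    heta1_nonneg heta1Phi

end
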